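/- arXiv:2107.12451 — 2 statements merged into one kernel-verified Lean document; each statement's English description precedes it below -/
import Mathlib

section
/- Let φ ∈ C₀²(ℝⁿ) be compactly supported, f : ℝⁿ → [0,∞) smooth with f(x) > 0 for x ≠ 0, τ > 0, and s > 0. Then for any coordinate index l ∈ {1,…,n} there exists a constant C_l > 0, independent of s and τ, such that ‖φ‖²_{L²} ≤ C_l ( 1/(τ² m(s)²) + s² ) ( ‖∂_{x_l} φ‖²_{L²} + ∫ τ² f(x)² φ(x)² dx ), where m(s) = min{ f(x) : x ∈ supp φ, |x| ≥ s }. -/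
open MeasureTheory

lemma rpow_half_sq {a : ℝ} (ha : 0 ≤ a) : (a ^ ((1:ℝ)/2)) ^ 2 = a := by
  rw [← Real.rpow_natCast (a ^ ((1:ℝ)/2)) 2, ← Real.rpow_mul ha]
  norm_num

lemma sq_integral_le_cs {X : Type*} [MeasurableSpace X] (μ : Measure X) [IsFiniteMeasure μ]
    (u : X → ℝ) (hu : MemLp u 2 μ) :
    (∫ t, u t ∂μ) ^ 2 ≤ (μ Set.univ).toReal * ∫ t, (u t) ^ 2 ∂μ := by
  have hpq : (2:ℝ).HolderConjugate 2 := Real.HolderConjugate.two_two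
  have hmem1 : MemLp (fun t => |u t|) (ENNReal.ofReal 2) μ := by
    have := hu.norm
    simpa [Real.norm_eq_abs, ENNReal.ofReal_ofNat] using this
  have hmem2 : MemLp (fun _ : X => (1:ℝ)) (ENNReal.ofReal 2) μ := memLp_const 1
  have h2 := integral_mul_le_Lp_mul_Lq_of_nonneg (μ := μ) hpq
    (Filter.Eventually.of_forall fun t => abs_nonneg (u t))
    (Filter.Eventually.of_forall fun _ => zero_le_one) hmem1 hmem2
  have e1 : ∫ a, |u a| ^ (2:ℝ) ∂μ = ∫ t, (u t) ^ 2 ∂μ := by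
    refine integral_congr_ae (Filter.Eventually.of_forall fun a => ?_)
    beta_reduce
    rw [show (2:ℝ) = ((2:ℕ):ℝ) by norm_num, Real.rpow_natCast, sq_abs]
  have e2 : ∫ a, (1:ℝ) ^ (2:ℝ) ∂μ = (μ Set.univ).toReal := by
    simp [Real.one_rpow, measureReal_def]
  rw [e1, e2] at h2
  simp only [mul_one] at h2
  set A := ∫ t, (u t) ^ 2 ∂μ with hA
  have hA0 : 0 ≤ A := integral_nonneg fun t => sq_nonneg _
  set V := (μ Set.univ).toReal with hV
  have hV0 : 0 ≤ V := ENNReal.toReal_nonneg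
  have habs : |∫ t, u t ∂μ| ≤ ∫ t, |u t| ∂μ := by
    simpa [Real.norm_eq_abs] using norm_integral_le_integral_norm (μ := μ) u
  calc (∫ t, u t ∂μ) ^ 2 = |∫ t, u t ∂μ| ^ 2 := (sq_abs _).symm
    _ ≤ (A ^ ((1:ℝ)/2) * V ^ ((1:ℝ)/2)) ^ 2 := by
        apply pow_le_pow_left₀ (abs_nonneg _) (habs.trans (by simpa using h2))
    _ = (A ^ ((1:ℝ)/2)) ^ 2 * (V ^ ((1:ℝ)/2)) ^ 2 := by ring
    _ = A * V := by rw [rpow_half_sq hA0, rpow_half_sq hV0]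
    _ = V * A := mul_comm _ _

set_option maxHeartbeats 1600000 in
/-- For `φ ∈ C₀²(ℝⁿ)`, `f` smooth nonnegative with `f > 0` off the origin,
and any coordinate `l`, there is `C_l > 0` independent of `s` and `τ` such that
`‖φ‖² ≤ C_l (1/(τ² m(s)²) + s²)(‖∂_{x_l}φ‖² + ∫ τ² f² φ²)`, where
`m(s) = min{ f(x) : x ∈ supp φ, |x| ≥ s }`. -/
theorem aux_lower_bound_lemma {n : ℕ}
    (φ f : EuclideanSpace ℝ (Fin n) → ℝ)
    (hφ : ContDiff ℝ 2 φ) (hφs : HasCompactSupport φ)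
    (hf : ContDiff ℝ (⊤ : ℕ∞) f) (hfnn : ∀ x, 0 ≤ f x)
    (hfpos : ∀ x : EuclideanSpace ℝ (Fin n), x ≠ 0 → 0 < f x)
    (l : Fin n) :
    ∃ C > (0 : ℝ), ∀ τ s : ℝ, 0 < τ → 0 < s →
      (∫ x : EuclideanSpace ℝ (Fin n), (φ x) ^ 2) ≤
        C * (1 / (τ ^ 2 * (sInf (f '' {x ∈ tsupport φ | s ≤ ‖x‖})) ^ 2) + s ^ 2) *
          ((∫ x : EuclideanSpace ℝ (Fin n),
              (fderiv ℝ φ x (EuclideanSpace.single l 1)) ^ 2) +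
            ∫ x : EuclideanSpace ℝ (Fin n), τ ^ 2 * (f x) ^ 2 * (φ x) ^ 2) := by
  classical
  set e : EuclideanSpace ℝ (Fin n) := EuclideanSpace.single l 1 with hedef
  have hnorme : ‖e‖ = 1 := by simp [hedef, EuclideanSpace.norm_single]
  set D : EuclideanSpace ℝ (Fin n) → ℝ := fun x => fderiv ℝ φ x e with hDdef
  have hφc : Continuous φ := hφ.continuous
  have hDc : Continuous D := by
    have h1 : Continuous (fderiv ℝ φ) := hφ.continuous_fderiv (by norm_num)
    exact h1.clm_apply continuous_const
  have hDs : HasCompactSupport D := by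
    have := (hφs.fderiv ℝ)
    exact this.comp_left (g := fun L : EuclideanSpace ℝ (Fin n) →L[ℝ] ℝ => L e) (by simp)
  have hφ2cs : HasCompactSupport (fun x => φ x ^ 2) :=
    hφs.comp_left (g := fun y : ℝ => y ^ 2) (by simp)
  have hIφ2 : Integrable (fun x : EuclideanSpace ℝ (Fin n) => φ x ^ 2) :=
    (hφc.pow 2).integrable_of_hasCompactSupport hφ2cs
  have hID2 : Integrable (fun x : EuclideanSpace ℝ (Fin n) => D x ^ 2) :=
    (hDc.pow 2).integrable_of_hasCompactSupport
      (by exact hDs.comp_left (g := fun y : ℝ => y ^ 2) (by simp))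
  have hIfφ : Integrable (fun x : EuclideanSpace ℝ (Fin n) => f x ^ 2 * φ x ^ 2) := by
    refine ((hf.continuous.pow 2).mul (hφc.pow 2)).integrable_of_hasCompactSupport ?_
    exact hφ2cs.mul_left
  set A := ∫ x : EuclideanSpace ℝ (Fin n), D x ^ 2 with hAdef
  set B := ∫ x : EuclideanSpace ℝ (Fin n), f x ^ 2 * φ x ^ 2 with hBdef
  have hA0 : 0 ≤ A := integral_nonneg fun x => sq_nonneg _
  have hB0 : 0 ≤ B := integral_nonneg fun x => mul_nonneg (sq_nonneg _) (sq_nonneg _)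
  refine ⟨8, by norm_num, ?_⟩
  intro τ s hτ hs
  have hRB : (∫ x : EuclideanSpace ℝ (Fin n), τ ^ 2 * f x ^ 2 * φ x ^ 2) = τ ^ 2 * B := by
    simp_rw [mul_assoc]
    exact integral_const_mul _ _
  set S : Set (EuclideanSpace ℝ (Fin n)) := {x ∈ tsupport φ | s ≤ ‖x‖} with hSdef
  set m := sInf (f '' S) with hmdef
  set U : Set (EuclideanSpace ℝ (Fin n)) := {x | ‖x‖ < s} with hUdef
  have hU : MeasurableSet U := measurableSet_lt measurable_norm measurable_const
  set c : EuclideanSpace ℝ (Fin n) := (2 * s) • e with hcdef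
  have hnc : ‖c‖ = 2 * s := by
    rw [hcdef, norm_smul, hnorme, Real.norm_eq_abs, abs_of_pos (by linarith), mul_one]
  have hmemS : ∀ y : EuclideanSpace ℝ (Fin n), φ y ≠ 0 → s ≤ ‖y‖ → y ∈ S := by
    intro y h1 h2
    exact ⟨subset_tsupport φ (Function.mem_support.mpr h1), h2⟩
  -- pointwise key estimate
  have hfin : IsFiniteMeasure (volume.restrict (Set.Ioc (-(2*s)) 0)) := by
    constructor
    rw [Measure.restrict_apply_univ, Real.volume_Ioc]
    exact ENNReal.ofReal_lt_top
  have key : ∀ x : EuclideanSpace ℝ (Fin n), φ x ^ 2 ≤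
      2 * φ (x - c) ^ 2 + (4 * s) * ∫ t in Set.Ioc (-(2*s)) 0, D (x + t • e) ^ 2 := by
    intro x
    have hline : Continuous (fun t : ℝ => x + t • e) :=
      continuous_const.add (continuous_id.smul continuous_const)
    have hG : ∀ t : ℝ, HasDerivAt (fun t : ℝ => φ (x + t • e)) (D (x + t • e)) t := by
      intro t
      have h1 : HasDerivAt (fun t : ℝ => x + t • e) e t := by
        simpa using ((hasDerivAt_id t).smul_const e).const_add x
      have h2 : HasFDerivAt φ (fderiv ℝ φ (x + t • e)) (x + t • e) :=
        (hφ.differentiable (by norm_num)).differentiableAt.hasFDerivAt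
      exact h2.comp_hasDerivAt t h1
    have hFTC : (∫ t in (-(2*s))..0, D (x + t • e)) =
        φ (x + (0:ℝ) • e) - φ (x + (-(2*s)) • e) :=
      intervalIntegral.integral_eq_sub_of_hasDerivAt (fun t _ => hG t)
        ((hDc.comp hline).intervalIntegrable _ _)
    have hx0 : x + (0:ℝ) • e = x := by simp
    have hx1 : x + (-(2*s)) • e = x - c := by
      rw [hcdef, neg_smul]; abel
    rw [hx0, hx1] at hFTC
    have hioc : (∫ t in (-(2*s))..0, D (x + t • e)) =
        ∫ t in Set.Ioc (-(2*s)) 0, D (x + t • e) :=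
      intervalIntegral.integral_of_le (by linarith)
    obtain ⟨M, hM⟩ := hDs.exists_bound_of_continuous hDc
    have hcs := sq_integral_le_cs (volume.restrict (Set.Ioc (-(2*s)) 0))
      (fun t => D (x + t • e))
      (MemLp.of_bound ((hDc.comp hline).aestronglyMeasurable) M
        (Filter.Eventually.of_forall fun t => hM _))
    have hμuniv : ((volume.restrict (Set.Ioc (-(2*s)) 0)) Set.univ).toReal = 2 * s := by
      rw [Measure.restrict_apply_univ, Real.volume_Ioc]
      rw [show (0:ℝ) - (-(2*s)) = 2*s by ring, ENNReal.toReal_ofReal (by linarith)]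
    rw [hμuniv] at hcs
    have hJ : φ x = φ (x - c) + ∫ t in Set.Ioc (-(2*s)) 0, D (x + t • e) := by
      rw [← hioc, hFTC]; ring
    set J := ∫ t in Set.Ioc (-(2*s)) 0, D (x + t • e) with hJdef
    set K := ∫ t in Set.Ioc (-(2*s)) 0, D (x + t • e) ^ 2 with hKdef
    have hK0 : 0 ≤ K := integral_nonneg fun t => sq_nonneg _
    have hJ2 : J ^ 2 ≤ 2 * s * K := hcs
    rw [hJ]
    nlinarith [sq_nonneg (φ (x - c) - J)]
  -- Fubini for the gradient term
  set Hfun : EuclideanSpace ℝ (Fin n) → ℝ :=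
    fun x => ∫ t in Set.Ioc (-(2*s)) 0, D (x + t • e) ^ 2 with hHdef
  have hH0 : ∀ x, 0 ≤ Hfun x := fun x => integral_nonneg fun t => sq_nonneg _
  set F : EuclideanSpace ℝ (Fin n) → ℝ → ℝ :=
    fun x t => (Set.Ioc (-(2*s)) 0).indicator (fun t => D (x + t • e) ^ 2) t with hFdef
  have hHF : ∀ x, Hfun x = ∫ t, F x t := by
    intro x
    exact (integral_indicator measurableSet_Ioc).symm
  have hg : Continuous (fun p : EuclideanSpace ℝ (Fin n) × ℝ => D (p.1 + p.2 • e) ^ 2) :=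
    (hDc.comp (continuous_fst.add (continuous_snd.smul continuous_const))).pow 2
  have hFeq : Function.uncurry F =
      Set.indicator (Set.univ ×ˢ Set.Ioc (-(2*s)) 0)
        (fun p : EuclideanSpace ℝ (Fin n) × ℝ => D (p.1 + p.2 • e) ^ 2) := by
    funext p
    show (Set.Ioc (-(2*s)) 0).indicator (fun t => D (p.1 + t • e) ^ 2) p.2 = _
    by_cases hp : p.2 ∈ Set.Ioc (-(2*s)) 0
    · rw [Set.indicator_of_mem hp, Set.indicator_of_mem (Set.mem_prod.mpr ⟨Set.mem_univ _, hp⟩)]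
    · rw [Set.indicator_of_notMem hp,
        Set.indicator_of_notMem (fun hmem => hp (Set.mem_prod.mp hmem).2)]
  obtain ⟨R, hR⟩ := hDs.isCompact.isBounded.subset_closedBall (0 : EuclideanSpace ℝ (Fin n))
  obtain ⟨M, hM⟩ := hDs.exists_bound_of_continuous hDc
  have hM0 : 0 ≤ M := (norm_nonneg (D 0)).trans (hM 0)
  have hFint : Integrable (Function.uncurry F) (volume.prod volume) := by
    refine Integrable.mono'
      (g := Set.indicator (Metric.closedBall (0:EuclideanSpace ℝ (Fin n)) (R + 2*s)
        ×ˢ Set.Ioc (-(2*s)) 0) (fun _ => M ^ 2)) ?_ ?_ ?_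
    · rw [integrable_indicator_iff ((measurableSet_closedBall).prod measurableSet_Ioc)]
      refine (integrableOn_const_iff (by simp)).mpr (Or.inr ?_)
      rw [Measure.prod_prod]
      exact ENNReal.mul_lt_top (measure_closedBall_lt_top) (by
        rw [Real.volume_Ioc]; exact ENNReal.ofReal_lt_top)
    · rw [hFeq]
      exact (hg.stronglyMeasurable.indicator
        (MeasurableSet.univ.prod measurableSet_Ioc)).aestronglyMeasurable
    · refine Filter.Eventually.of_forall fun p => ?_
      have hGnn : 0 ≤ Set.indicator (Metric.closedBall (0:EuclideanSpace ℝ (Fin n)) (R + 2*s)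
          ×ˢ Set.Ioc (-(2*s)) 0) (fun _ => M ^ 2) p :=
        Set.indicator_nonneg (fun _ _ => sq_nonneg M) _
      by_cases hp : p.2 ∈ Set.Ioc (-(2*s)) 0
      · by_cases hD : D (p.1 + p.2 • e) = 0
        · have hz : Function.uncurry F p = 0 := by
            show (Set.Ioc (-(2*s)) 0).indicator (fun t => D (p.1 + t • e) ^ 2) p.2 = 0
            rw [Set.indicator_of_mem hp]
            show D (p.1 + p.2 • e) ^ 2 = 0
            rw [hD]; ring
          rw [hz, norm_zero]
          exact hGnn
        · have hmem : p.1 ∈ Metric.closedBall (0:EuclideanSpace ℝ (Fin n)) (R + 2*s) := by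
            have h1 : p.1 + p.2 • e ∈ Metric.closedBall (0:EuclideanSpace ℝ (Fin n)) R :=
              hR (subset_tsupport D (Function.mem_support.mpr hD))
            rw [Metric.mem_closedBall, dist_zero_right] at h1 ⊢
            have h2 : |p.2| ≤ 2 * s := by
              rcases hp with ⟨hp1, hp2⟩
              rw [abs_le]; constructor <;> linarith
            calc ‖p.1‖ = ‖p.1 + p.2 • e - p.2 • e‖ := by rw [add_sub_cancel_right]
              _ ≤ ‖p.1 + p.2 • e‖ + ‖p.2 • e‖ := norm_sub_le _ _
              _ ≤ R + 2 * s := by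
                  rw [norm_smul, hnorme, mul_one, Real.norm_eq_abs]
                  exact add_le_add h1 h2
          have hFp : Function.uncurry F p = D (p.1 + p.2 • e) ^ 2 := by
            show (Set.Ioc (-(2*s)) 0).indicator (fun t => D (p.1 + t • e) ^ 2) p.2 = _
            rw [Set.indicator_of_mem hp]
          have hGp : Set.indicator (Metric.closedBall (0:EuclideanSpace ℝ (Fin n)) (R + 2*s)
              ×ˢ Set.Ioc (-(2*s)) 0) (fun _ => M ^ 2) p = M ^ 2 :=
            Set.indicator_of_mem (Set.mem_prod.mpr ⟨hmem, hp⟩) _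
          rw [hFp, hGp, Real.norm_eq_abs, abs_of_nonneg (sq_nonneg _)]
          have h3 : |D (p.1 + p.2 • e)| ≤ M := by
            simpa [Real.norm_eq_abs] using hM (p.1 + p.2 • e)
          nlinarith [sq_abs (D (p.1 + p.2 • e)), abs_nonneg (D (p.1 + p.2 • e))]
      · have hz : Function.uncurry F p = 0 := by
          show (Set.Ioc (-(2*s)) 0).indicator (fun t => D (p.1 + t • e) ^ 2) p.2 = 0
          rw [Set.indicator_of_notMem hp]
        rw [hz, norm_zero]
        exact hGnn
  have hHI : Integrable Hfun := by
    have h := hFint.integral_prod_left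
    have heq : Hfun = fun x => ∫ t, F x t := funext hHF
    rw [heq]
    exact h
  have hHsum : (∫ x : EuclideanSpace ℝ (Fin n), Hfun x) = 2 * s * A := by
    have hswap : (∫ x : EuclideanSpace ℝ (Fin n), ∫ t : ℝ, F x t)
        = ∫ t : ℝ, ∫ x : EuclideanSpace ℝ (Fin n), F x t :=
      integral_integral_swap hFint
    have hinner : ∀ t : ℝ, (∫ x : EuclideanSpace ℝ (Fin n), F x t) =
        (Set.Ioc (-(2*s)) 0).indicator (fun _ => A) t := by
      intro t
      by_cases ht : t ∈ Set.Ioc (-(2*s)) 0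
      · rw [Set.indicator_of_mem ht]
        have h1 : ∀ x : EuclideanSpace ℝ (Fin n), F x t = D (x + t • e) ^ 2 := by
          intro x
          show (Set.Ioc (-(2*s)) 0).indicator (fun t => D (x + t • e) ^ 2) t = _
          rw [Set.indicator_of_mem ht]
        simp_rw [h1]
        exact integral_add_right_eq_self (fun y => D y ^ 2) (t • e)
      · rw [Set.indicator_of_notMem ht]
        have h1 : ∀ x : EuclideanSpace ℝ (Fin n), F x t = 0 := by
          intro x
          show (Set.Ioc (-(2*s)) 0).indicator (fun t => D (x + t • e) ^ 2) t = 0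
          rw [Set.indicator_of_notMem ht]
        simp_rw [h1, integral_zero]
    calc (∫ x : EuclideanSpace ℝ (Fin n), Hfun x)
        = ∫ x : EuclideanSpace ℝ (Fin n), ∫ t : ℝ, F x t := by simp_rw [hHF]
      _ = ∫ t : ℝ, ∫ x : EuclideanSpace ℝ (Fin n), F x t := hswap
      _ = ∫ t : ℝ, (Set.Ioc (-(2*s)) 0).indicator (fun _ => A) t := by simp_rw [hinner]
      _ = (volume (Set.Ioc (-(2*s)) 0)).toReal • A := integral_indicator_const _ measurableSet_Ioc
      _ = 2 * s * A := by
          rw [Real.volume_Ioc, show (0:ℝ) - (-(2*s)) = 2*s by ring,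
            ENNReal.toReal_ofReal (by linarith), smul_eq_mul]
  -- translated term
  set V : Set (EuclideanSpace ℝ (Fin n)) := {y | y + c ∈ U} with hVdef
  have hVmeas : MeasurableSet V := hU.preimage (measurable_id.add_const c)
  set W : EuclideanSpace ℝ (Fin n) → ℝ := V.indicator (fun y => φ y ^ 2) with hWdef
  have hT1 : (∫ x in U, φ (x - c) ^ 2) = ∫ y : EuclideanSpace ℝ (Fin n), W y := by
    rw [← integral_indicator hU]
    rw [← integral_add_right_eq_self (U.indicator fun x => φ (x - c) ^ 2) c]
    refine integral_congr_ae (Filter.Eventually.of_forall fun y => ?_)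
    show U.indicator (fun x => φ (x - c) ^ 2) (y + c) = V.indicator (fun y => φ y ^ 2) y
    by_cases h : y + c ∈ U
    · rw [Set.indicator_of_mem h, Set.indicator_of_mem (show y ∈ V from h)]
      show φ (y + c - c) ^ 2 = φ y ^ 2
      rw [add_sub_cancel_right]
    · rw [Set.indicator_of_notMem h, Set.indicator_of_notMem (show y ∉ V from h)]
  have hshift : Integrable (fun x : EuclideanSpace ℝ (Fin n) => φ (x - c) ^ 2) :=
    hIφ2.comp_sub_right c
  have hWint : Integrable W := hIφ2.indicator hVmeas
  have hW0 : ∀ y, 0 ≤ W y := fun y => Set.indicator_nonneg (fun _ _ => sq_nonneg _) y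
  have hWmem : ∀ y : EuclideanSpace ℝ (Fin n), W y ≠ 0 → (y ∈ S ∧ W y = φ y ^ 2) := by
    intro y hy
    by_cases h : y ∈ V
    · have hWy : W y = φ y ^ 2 := Set.indicator_of_mem h _
      refine ⟨?_, hWy⟩
      have hyU : ‖y + c‖ < s := h
      have hφy : φ y ≠ 0 := fun h0 => hy (by rw [hWy, h0]; ring)
      have hsy : s ≤ ‖y‖ := by
        have h1 : ‖c‖ ≤ ‖y + c‖ + ‖y‖ := by
          calc ‖c‖ = ‖(y + c) - y‖ := by rw [add_sub_cancel_left]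
            _ ≤ ‖y + c‖ + ‖y‖ := norm_sub_le _ _
        rw [hnc] at h1
        linarith
      exact hmemS y hφy hsy
    · exact absurd (Set.indicator_of_notMem h _) hy
  -- split the integral
  have hsplit : (∫ x : EuclideanSpace ℝ (Fin n), φ x ^ 2)
      = (∫ x in U, φ x ^ 2) + ∫ x in Uᶜ, φ x ^ 2 :=
    (integral_add_compl hU hIφ2).symm
  have hUbound : (∫ x in U, φ x ^ 2) ≤
      2 * (∫ y : EuclideanSpace ℝ (Fin n), W y) + 8 * s ^ 2 * A := by
    have h1 : (∫ x in U, φ x ^ 2) ≤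
        ∫ x in U, (2 * φ (x - c) ^ 2 + (4 * s) * Hfun x) := by
      refine setIntegral_mono_on hIφ2.integrableOn
        ((hshift.const_mul 2).add (hHI.const_mul (4*s))).integrableOn hU ?_
      intro x _
      exact key x
    have h2 : (∫ x in U, (2 * φ (x - c) ^ 2 + (4 * s) * Hfun x)) =
        2 * (∫ x in U, φ (x - c) ^ 2) + (4 * s) * ∫ x in U, Hfun x := by
      rw [integral_add ((hshift.const_mul 2).integrableOn) ((hHI.const_mul (4*s)).integrableOn),
        integral_const_mul, integral_const_mul]
    rw [hT1] at h2
    have h3 : (∫ x in U, Hfun x) ≤ ∫ x : EuclideanSpace ℝ (Fin n), Hfun x :=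
      setIntegral_le_integral hHI (Filter.Eventually.of_forall hH0)
    have h4 : (4 * s) * (∫ x in U, Hfun x) ≤ (4 * s) * (2 * s * A) :=
      mul_le_mul_of_nonneg_left (h3.trans_eq hHsum) (by positivity)
    have h5 : (4 * s) * (2 * s * A) = 8 * s ^ 2 * A := by ring
    linarith
  -- case analysis on S
  rcases Set.eq_empty_or_nonempty S with hSemp | hSne
  · -- S is empty : m = 0, and φ vanishes outside U
    have hm0 : m = 0 := by rw [hmdef, hSemp, Set.image_empty, Real.sInf_empty]
    have hW0' : ∀ y, W y = 0 := by
      intro y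
      by_contra hy
      obtain ⟨hyS, _⟩ := hWmem y hy
      rw [hSemp] at hyS
      exact hyS
    have hWint0 : (∫ y : EuclideanSpace ℝ (Fin n), W y) = 0 := by
      rw [show W = fun _ : EuclideanSpace ℝ (Fin n) => (0:ℝ) from funext hW0']
      exact integral_zero _ _
    have hUc0 : (∫ x in Uᶜ, φ x ^ 2) = 0 := by
      have hEq : Set.EqOn (fun x : EuclideanSpace ℝ (Fin n) => φ x ^ 2)
          (fun _ => (0:ℝ)) Uᶜ := by
        intro x hx
        by_contra h0
        have hφx : φ x ≠ 0 := fun hh => h0 (by show φ x ^ 2 = 0; rw [hh]; ring)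
        have hxS : x ∈ S := hmemS x hφx (not_lt.mp hx)
        rw [hSemp] at hxS
        exact hxS
      rw [setIntegral_congr_fun hU.compl hEq]
      simp
    show (∫ x : EuclideanSpace ℝ (Fin n), φ x ^ 2) ≤
      8 * (1 / (τ ^ 2 * m ^ 2) + s ^ 2) *
        (A + ∫ x : EuclideanSpace ℝ (Fin n), τ ^ 2 * f x ^ 2 * φ x ^ 2)
    rw [hRB, hm0]
    have hτB : 0 ≤ τ ^ 2 * B := by positivity
    have hexp0 : 8 * (1 / (τ ^ 2 * (0:ℝ) ^ 2) + s ^ 2) * (A + τ ^ 2 * B)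
        = 8 * s ^ 2 * A + 8 * (s ^ 2 * (τ ^ 2 * B)) := by
      norm_num
      ring
    rw [hexp0]
    have h6 : 0 ≤ 8 * (s ^ 2 * (τ ^ 2 * B)) := by positivity
    linarith [hsplit, hUbound, hWint0, hUc0]
  · -- S nonempty : m > 0
    have hScpt : IsCompact S :=
      hφs.inter_right (isClosed_le continuous_const continuous_norm)
    obtain ⟨x₀, hx₀S, hx₀min⟩ := hScpt.exists_isMinOn hSne hf.continuous.continuousOn
    have hx₀ne : x₀ ≠ 0 := by
      intro h0
      have h1 := hx₀S.2
      rw [h0, norm_zero] at h1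
      linarith
    have hmpos : 0 < m := by
      refine lt_of_lt_of_le (hfpos x₀ hx₀ne) (le_csInf (hSne.image f) ?_)
      rintro z ⟨y, hy, rfl⟩
      exact hx₀min hy
    have hmle : ∀ y ∈ S, m ≤ f y := fun y hy =>
      csInf_le ⟨0, by rintro z ⟨w, _, rfl⟩; exact hfnn w⟩ (Set.mem_image_of_mem f hy)
    have hptU : ∀ y : EuclideanSpace ℝ (Fin n), W y ≤ f y ^ 2 * φ y ^ 2 / m ^ 2 := by
      intro y
      by_cases hy : W y = 0
      · rw [hy]; positivity
      · obtain ⟨hyS, hWy⟩ := hWmem y hy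
        rw [hWy, le_div_iff₀ (by positivity)]
        have h1 := hmle y hyS
        have hm2 : m ^ 2 ≤ f y ^ 2 := by nlinarith [hmpos.le, hfnn y]
        nlinarith [sq_nonneg (φ y), hm2]
    have hWle : (∫ y : EuclideanSpace ℝ (Fin n), W y) ≤ B / m ^ 2 := by
      have h := integral_mono hWint (hIfφ.div_const (m ^ 2)) hptU
      rwa [integral_div] at h
    have hUc : (∫ x in Uᶜ, φ x ^ 2) ≤ B / m ^ 2 := by
      have h1 : (∫ x in Uᶜ, φ x ^ 2) ≤ ∫ x in Uᶜ, f x ^ 2 * φ x ^ 2 / m ^ 2 := by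
        refine setIntegral_mono_on hIφ2.integrableOn
          (hIfφ.div_const (m ^ 2)).integrableOn hU.compl ?_
        intro x hx
        by_cases h0 : φ x = 0
        · rw [h0]; norm_num
        · have hxS : x ∈ S := hmemS x h0 (not_lt.mp hx)
          have h2 := hmle x hxS
          have hm2 : m ^ 2 ≤ f x ^ 2 := by nlinarith [hmpos.le, hfnn x]
          rw [le_div_iff₀ (by positivity)]
          nlinarith [sq_nonneg (φ x), hm2]
      have h2 : (∫ x in Uᶜ, f x ^ 2 * φ x ^ 2 / m ^ 2) ≤
          ∫ x : EuclideanSpace ℝ (Fin n), f x ^ 2 * φ x ^ 2 / m ^ 2 :=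
        setIntegral_le_integral (hIfφ.div_const _)
          (Filter.Eventually.of_forall fun x => by positivity)
      have h3 : (∫ x : EuclideanSpace ℝ (Fin n), f x ^ 2 * φ x ^ 2 / m ^ 2) = B / m ^ 2 :=
        integral_div _ _
      linarith
    have htotal : (∫ x : EuclideanSpace ℝ (Fin n), φ x ^ 2) ≤ 3 * (B / m ^ 2) + 8 * s ^ 2 * A := by
      linarith [hsplit, hUbound, hUc, hWle]
    show (∫ x : EuclideanSpace ℝ (Fin n), φ x ^ 2) ≤
      8 * (1 / (τ ^ 2 * m ^ 2) + s ^ 2) *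
        (A + ∫ x : EuclideanSpace ℝ (Fin n), τ ^ 2 * f x ^ 2 * φ x ^ 2)
    rw [hRB]
    have hexp : 8 * (1 / (τ ^ 2 * m ^ 2) + s ^ 2) * (A + τ ^ 2 * B) =
        8 * (A / (τ ^ 2 * m ^ 2)) + 8 * (B / m ^ 2) + 8 * s ^ 2 * A
          + 8 * (s ^ 2 * (τ ^ 2 * B)) := by
      field_simp
      ring
    rw [hexp]
    have n1 : 0 ≤ A / (τ ^ 2 * m ^ 2) := by positivity
    have n2 : 0 ≤ s ^ 2 * (τ ^ 2 * B) := by positivity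
    have n3 : 0 ≤ B / m ^ 2 := div_nonneg hB0 (sq_nonneg m)
    linarith
end

section
/- Let uₙ(x,y,t) = e^{iηₙ y + √λₙ t} vₙ(x) with ηₙ ≥ 1, λₙ ≤ C₁ (ln ηₙ)², vₙ ∈ L²(B), ‖vₙ‖_{L²(B(0,1/2))} ≥ c > 0, and ‖vₙ‖_{L²(B)} = 1. Let V = B × [−π,π] × [−δ,δ] and V' = B(0,1/2) × [−π/2,π/2] × [−δ/2,δ/2]. Then: (i) ‖∂_y^k uₙ‖²_{L²(V')} ≥ C ηₙ^{2k} for a constant C > 0 independent of k and n; (ii) ‖uₙ‖²_{L²(V)} ≤ C' ηₙ^{2√C₁ δ}. Consequently, for k > √C₁ δ, the ratio ‖∂_y^k uₙ‖²_{L²(V')} / ( ‖uₙ‖²_{L²(V)} ) tends to infinity as ηₙ → ∞. -/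
open MeasureTheory Filter Real

/-! For a separated mode `u = e^{i a y + s t} w(x)` one has
`|∂_y^k u|² = a^{2k} e^{2 s t} w(x)²`, so the `L²` integrals over boxes factor into an integral
of `w²` in `x`, a length in `y` and an integral of `e^{2 s t}` in `t`. For `s ≥ 0` that last
factor is at least `d` on `[-d, d]` (the weight is `≥ 1` for `t ≥ 0`) and at most
`2 d e^{2 s d}`. With `s = √λₙ ≤ √C₁ log ηₙ` the upper bound is a power `ηₙ^{2 √C₁ δ}`, while
the `k`-th derivative gains `ηₙ^{2k}`; so the ratio grows like `ηₙ^{2k - 2 √C₁ δ}`. -/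

open Complex in
lemma iteratedDeriv_cexp_mul_add_mul (c b z : ℂ) (k : ℕ) :
    iteratedDeriv k (fun y : ℝ => exp (c * y + b) * z) =
      fun y : ℝ => c ^ k * (exp (c * y + b) * z) := by
  induction k with
  | zero => simp
  | succ k ih =>
    rw [iteratedDeriv_succ, ih]
    funext y
    have hlin : HasDerivAt (fun y : ℝ => c * y + b) c y := by
      simpa using (ofRealCLM.hasDerivAt (x := y)).const_mul c |>.add_const b
    rw [((hlin.cexp.mul_const z).const_mul (c ^ k)).deriv]
    ring

lemma setIntegral_prod_prod_mul {E : Type*} [MeasureSpace E] [SigmaFinite (volume : Measure E)]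
    (S : Set E) (A B : Set ℝ) (f : E → ℝ) (g : ℝ → ℝ) :
    ∫ p in S ×ˢ (A ×ˢ B), f p.1 * g p.2.2 = (∫ x in S, f x) * (volume.real A * ∫ t in B, g t) := by
  rw [Measure.volume_eq_prod, setIntegral_prod_mul f (fun q : ℝ × ℝ => g q.2),
    Measure.volume_eq_prod, ← Measure.prod_restrict, integral_fun_snd]
  simp [measureReal_def]

lemma le_setIntegral_Icc_exp_mul_sq {s d : ℝ} (hs : 0 ≤ s) (hd : 0 ≤ d) :
    d ≤ ∫ t in Set.Icc (-d) d, exp (s * t) ^ 2 := by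
  have hint : IntegrableOn (fun t => exp (s * t) ^ 2) (Set.Icc (-d) d) :=
    Continuous.integrableOn_Icc (by fun_prop)
  calc d = ∫ _ in Set.Icc 0 d, (1 : ℝ) := by simp [hd]
    _ ≤ ∫ t in Set.Icc 0 d, exp (s * t) ^ 2 :=
      setIntegral_mono_on (integrableOn_const (by simp)) (hint.mono_set (by gcongr; linarith))
        measurableSet_Icc fun t ht => one_le_pow₀ (one_le_exp (mul_nonneg hs ht.1))
    _ ≤ ∫ t in Set.Icc (-d) d, exp (s * t) ^ 2 :=
      setIntegral_mono_set hint (.of_forall fun t => by positivity)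
        (Set.Icc_subset_Icc (by linarith) le_rfl).eventuallyLE

lemma setIntegral_Icc_exp_mul_sq_le {s d : ℝ} (hs : 0 ≤ s) (hd : 0 ≤ d) :
    ∫ t in Set.Icc (-d) d, exp (s * t) ^ 2 ≤ 2 * d * exp (s * d) ^ 2 := by
  calc ∫ t in Set.Icc (-d) d, exp (s * t) ^ 2 ≤ ∫ _ in Set.Icc (-d) d, exp (s * d) ^ 2 := by
        refine setIntegral_mono_on (Continuous.integrableOn_Icc (by fun_prop))
          (integrableOn_const (by simp)) measurableSet_Icc fun t ht => ?_
        gcongr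
        exact ht.2
    _ = 2 * d * exp (s * d) ^ 2 := by
        rw [setIntegral_const, volume_real_Icc_of_le (by linarith), smul_eq_mul]
        ring

noncomputable def separableMode {E : Type*} (a s : ℝ) (w : E → ℝ) (p : E × ℝ × ℝ) : ℂ :=
  Complex.exp (Complex.I * a * p.2.1 + s * p.2.2) * w p.1

section separableMode

variable {E : Type*} (a : ℝ) {s : ℝ} (w : E → ℝ)

lemma norm_iteratedDeriv_separableMode_sq (k : ℕ) (x : E) (y t : ℝ) :
    ‖iteratedDeriv k (fun y => separableMode a s w (x, y, t)) y‖ ^ 2 =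
      a ^ (2 * k) * (w x ^ 2 * exp (s * t) ^ 2) := by
  have hre : (Complex.I * a * y + s * t).re = s * t := by simp
  simp only [separableMode, iteratedDeriv_cexp_mul_add_mul, norm_mul, norm_pow, Complex.norm_exp,
    hre, Complex.norm_I, Complex.norm_real, Real.norm_eq_abs, one_mul]
  rw [mul_pow, mul_pow, sq_abs, ← pow_mul, pow_mul', sq_abs, ← pow_mul]
  ring

variable [MeasureSpace E] [SigmaFinite (volume : Measure E)] (S : Set E)

lemma integral_norm_iteratedDeriv_separableMode_sq (A B : Set ℝ) (k : ℕ) :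
    ∫ p in S ×ˢ (A ×ˢ B), ‖iteratedDeriv k (fun y => separableMode a s w (p.1, y, p.2.2)) p.2.1‖ ^ 2
      = a ^ (2 * k) * ((∫ x in S, w x ^ 2) * (volume.real A * ∫ t in B, exp (s * t) ^ 2)) := by
  simp only [norm_iteratedDeriv_separableMode_sq]
  rw [integral_const_mul, setIntegral_prod_prod_mul S A B (w · ^ 2) (fun t => exp (s * t) ^ 2)]

lemma le_integral_norm_iteratedDeriv_separableMode_sq (k : ℕ) {L d : ℝ} (hs : 0 ≤ s)
    (hL : 0 ≤ L) (hd : 0 ≤ d) :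
    2 * L * d * (∫ x in S, w x ^ 2) * a ^ (2 * k) ≤
      ∫ p in S ×ˢ (Set.Icc (-L) L ×ˢ Set.Icc (-d) d),
        ‖iteratedDeriv k (fun y => separableMode a s w (p.1, y, p.2.2)) p.2.1‖ ^ 2 := by
  rw [integral_norm_iteratedDeriv_separableMode_sq, volume_real_Icc_of_le (by linarith)]
  have hw : 0 ≤ ∫ x in S, w x ^ 2 := integral_nonneg fun x => sq_nonneg _
  have ha : 0 ≤ a ^ (2 * k) := (even_two_mul k).pow_nonneg a
  calc 2 * L * d * (∫ x in S, w x ^ 2) * a ^ (2 * k)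
      = a ^ (2 * k) * ((∫ x in S, w x ^ 2) * ((L - -L) * d)) := by ring
    _ ≤ _ := by
        gcongr
        · linarith
        · exact le_setIntegral_Icc_exp_mul_sq hs hd

lemma le_integral_norm_separableMode_sq {L d : ℝ} (hs : 0 ≤ s) (hL : 0 ≤ L) (hd : 0 ≤ d) :
    2 * L * d * (∫ x in S, w x ^ 2) ≤
      ∫ p in S ×ˢ (Set.Icc (-L) L ×ˢ Set.Icc (-d) d), ‖separableMode a s w p‖ ^ 2 := by
  simpa using le_integral_norm_iteratedDeriv_separableMode_sq a w S 0 hs hL hd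

lemma integral_norm_separableMode_sq_le {L d : ℝ} (hs : 0 ≤ s) (hL : 0 ≤ L) (hd : 0 ≤ d) :
    ∫ p in S ×ˢ (Set.Icc (-L) L ×ˢ Set.Icc (-d) d), ‖separableMode a s w p‖ ^ 2 ≤
      4 * L * d * (∫ x in S, w x ^ 2) * exp (s * d) ^ 2 := by
  have h := integral_norm_iteratedDeriv_separableMode_sq a (s := s) w S (Set.Icc (-L) L) (Set.Icc (-d) d) 0
  simp only [iteratedDeriv_zero, pow_zero, mul_zero, one_mul] at h
  rw [h, volume_real_Icc_of_le (by linarith)]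
  have hw : 0 ≤ ∫ x in S, w x ^ 2 := integral_nonneg fun x => sq_nonneg _
  calc _ ≤ (∫ x in S, w x ^ 2) * ((L - -L) * (2 * d * exp (s * d) ^ 2)) := by
        gcongr
        · linarith
        · exact setIntegral_Icc_exp_mul_sq_le hs hd
    _ = _ := by ring

end separableMode

lemma exp_sqrt_mul_sq_le_rpow {lam C η δ : ℝ} (hη : 1 ≤ η) (hδ : 0 ≤ δ)
    (hlam : lam ≤ C * log η ^ 2) : exp (√lam * δ) ^ 2 ≤ η ^ (2 * √C * δ) := by
  have hsqrt : √lam ≤ √C * log η := by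
    simpa [sqrt_mul' C (sq_nonneg _), sqrt_sq (log_nonneg hη)] using sqrt_le_sqrt hlam
  rw [rpow_def_of_pos (by linarith), ← exp_nat_mul]
  exact exp_le_exp.2 (by push_cast; nlinarith [log_nonneg hη])

lemma tendsto_div_atTop_of_le_rpow {ι : Type*} {l : Filter ι} {f g η : ι → ℝ} {a b C C' : ℝ}
    (hη : Tendsto η l atTop) (hC : 0 < C) (hC' : 0 < C') (hba : b < a)
    (hf : ∀ i, C * η i ^ a ≤ f i) (hg : ∀ i, 0 < g i ∧ g i ≤ C' * η i ^ b) :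
    Tendsto (fun i => f i / g i) l atTop := by
  have hlow : Tendsto (fun i => C / C' * η i ^ (a - b)) l atTop :=
    ((tendsto_rpow_atTop (sub_pos.2 hba)).comp hη).const_mul_atTop (div_pos hC hC')
  refine tendsto_atTop_mono' l ?_ hlow
  filter_upwards [hη.eventually_gt_atTop 0] with i hi
  obtain ⟨hg0, hgb⟩ := hg i
  calc C / C' * η i ^ (a - b) = C * η i ^ a / (C' * η i ^ b) := by
        rw [rpow_sub hi]; field_simp
    _ ≤ f i / g i := div_le_div₀ ((by positivity : 0 ≤ C * η i ^ a).trans (hf i)) (hf i) hg0 hgb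

theorem growth_contradiction_general {m : ℕ} (δ c C₁ : ℝ)
    (hδ : 0 < δ) (hc : 0 < c)
    (v : ℕ → EuclideanSpace ℝ (Fin m) → ℝ) (lam η : ℕ → ℝ)
    (hη1 : ∀ n, 1 ≤ η n) (hηtop : Tendsto η atTop atTop)
    (hlam : ∀ n, lam n ≤ C₁ * (Real.log (η n)) ^ 2)
    (hnorm : ∀ n, (∫ x in Metric.ball (0 : EuclideanSpace ℝ (Fin m)) 1, (v n x) ^ 2) = 1)
    (hlow : ∀ n, c ^ 2 ≤
      ∫ x in Metric.ball (0 : EuclideanSpace ℝ (Fin m)) (1 / 2), (v n x) ^ 2)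
    (U : ℕ → EuclideanSpace ℝ (Fin m) × ℝ × ℝ → ℂ)
    (hU : ∀ n (x : EuclideanSpace ℝ (Fin m)) (y t : ℝ),
      U n (x, y, t) = Complex.exp (Complex.I * (η n) * y + Real.sqrt (lam n) * t) * (v n x : ℂ))
    (V V' : Set (EuclideanSpace ℝ (Fin m) × ℝ × ℝ))
    (hV : V = (Metric.ball 0 1) ×ˢ (Set.Icc (-π) π ×ˢ Set.Icc (-δ) δ))
    (hV' : V' = (Metric.ball 0 (1 / 2)) ×ˢ
      (Set.Icc (-(π / 2)) (π / 2) ×ˢ Set.Icc (-(δ / 2)) (δ / 2))) :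
    (∃ C > (0 : ℝ), ∀ k n : ℕ,
      C * (η n) ^ (2 * k) ≤
        ∫ p in V', ‖iteratedDeriv k (fun y => U n (p.1, y, p.2.2)) p.2.1‖ ^ 2) ∧
    (∃ C' > (0 : ℝ), ∀ n : ℕ,
      (∫ p in V, ‖U n p‖ ^ 2) ≤ C' * (η n) ^ (2 * Real.sqrt C₁ * δ)) ∧
    (∀ k : ℕ, Real.sqrt C₁ * δ < (k : ℝ) →
      Tendsto (fun n =>
        (∫ p in V', ‖iteratedDeriv k (fun y => U n (p.1, y, p.2.2)) p.2.1‖ ^ 2) /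
          ∫ p in V, ‖U n p‖ ^ 2) atTop atTop) := by
  have hUn n : U n = separableMode (η n) √(lam n) (v n) := funext fun ⟨x, y, t⟩ => hU n x y t
  have lower (k n : ℕ) : π * δ / 2 * c ^ 2 * η n ^ (2 * k) ≤
      ∫ p in V', ‖iteratedDeriv k (fun y => U n (p.1, y, p.2.2)) p.2.1‖ ^ 2 := by
    rw [hV', hUn]
    refine le_trans ?_ (le_integral_norm_iteratedDeriv_separableMode_sq _ _ _ k (sqrt_nonneg _)
      (by positivity) (by positivity))
    rw [show 2 * (π / 2) * (δ / 2) = π * δ / 2 by ring]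
    gcongr
    exacts [(even_two_mul k).pow_nonneg _, hlow n]
  have upper n : ∫ p in V, ‖U n p‖ ^ 2 ≤ 4 * π * δ * η n ^ (2 * √C₁ * δ) := by
    rw [hV, hUn]
    refine (integral_norm_separableMode_sq_le _ _ _ (sqrt_nonneg _) pi_pos.le hδ.le).trans ?_
    rw [hnorm, mul_one]
    gcongr
    exact exp_sqrt_mul_sq_le_rpow (hη1 n) hδ.le (hlam n)
  have hden_pos n : 0 < ∫ p in V, ‖U n p‖ ^ 2 := by
    rw [hV, hUn]
    refine lt_of_lt_of_le ?_ (le_integral_norm_separableMode_sq _ _ _ (sqrt_nonneg _) pi_pos.le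
      hδ.le)
    rw [hnorm]
    positivity
  refine ⟨⟨_, by positivity, lower⟩, ⟨_, by positivity, upper⟩, fun k hk => ?_⟩
  refine tendsto_div_atTop_of_le_rpow (C := π * δ / 2 * c ^ 2) (a := (2 * k : ℕ)) hηtop (by positivity) (by positivity) ?_
    (fun n => by rw [rpow_natCast]; exact lower k n) fun n => ⟨hden_pos n, upper n⟩
  push_cast
  linarith

/-- for `uₙ(x,y,t) = e^{iηₙ y + √λₙ t} vₙ(x)` with `ηₙ ≥ 1`,
`λₙ ≤ C₁ (ln ηₙ)²`, `‖vₙ‖_{L²(B(0,1/2))} ≥ c > 0` and `‖vₙ‖_{L²(B)} = 1`, one has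
(i) `‖∂_y^k uₙ‖²_{L²(V')} ≥ C ηₙ^{2k}` with `C` independent of `k, n`;
(ii) `‖uₙ‖²_{L²(V)} ≤ C' ηₙ^{2√C₁ δ}`;
and consequently for `k > √C₁ δ` the ratio tends to infinity as `ηₙ → ∞`. -/
theorem growth_contradiction {m : ℕ} (δ c C₁ : ℝ)
    (hδ : 0 < δ) (hc : 0 < c) (hC₁ : 0 ≤ C₁)
    (v : ℕ → EuclideanSpace ℝ (Fin m) → ℝ) (lam η : ℕ → ℝ)
    (hvc : ∀ n, Continuous (v n))
    (hη1 : ∀ n, 1 ≤ η n) (hηtop : Tendsto η atTop atTop)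
    (hlamnn : ∀ n, 0 ≤ lam n)
    (hlam : ∀ n, lam n ≤ C₁ * (Real.log (η n)) ^ 2)
    (hnorm : ∀ n, (∫ x in Metric.ball (0 : EuclideanSpace ℝ (Fin m)) 1, (v n x) ^ 2) = 1)
    (hlow : ∀ n, c ^ 2 ≤
      ∫ x in Metric.ball (0 : EuclideanSpace ℝ (Fin m)) (1 / 2), (v n x) ^ 2)
    (U : ℕ → EuclideanSpace ℝ (Fin m) × ℝ × ℝ → ℂ)
    (hU : ∀ n (x : EuclideanSpace ℝ (Fin m)) (y t : ℝ),
      U n (x, y, t) = Complex.exp (Complex.I * (η n) * y + Real.sqrt (lam n) * t) * (v n x : ℂ))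
    (V V' : Set (EuclideanSpace ℝ (Fin m) × ℝ × ℝ))
    (hV : V = (Metric.ball 0 1) ×ˢ (Set.Icc (-π) π ×ˢ Set.Icc (-δ) δ))
    (hV' : V' = (Metric.ball 0 (1 / 2)) ×ˢ
      (Set.Icc (-(π / 2)) (π / 2) ×ˢ Set.Icc (-(δ / 2)) (δ / 2))) :
    (∃ C > (0 : ℝ), ∀ k n : ℕ,
      C * (η n) ^ (2 * k) ≤
        ∫ p in V', ‖iteratedDeriv k (fun y => U n (p.1, y, p.2.2)) p.2.1‖ ^ 2) ∧
    (∃ C' > (0 : ℝ), ∀ n : ℕ,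
      (∫ p in V, ‖U n p‖ ^ 2) ≤ C' * (η n) ^ (2 * Real.sqrt C₁ * δ)) ∧
    (∀ k : ℕ, Real.sqrt C₁ * δ < (k : ℝ) →
      Tendsto (fun n =>
        (∫ p in V', ‖iteratedDeriv k (fun y => U n (p.1, y, p.2.2)) p.2.1‖ ^ 2) /
          ∫ p in V, ‖U n p‖ ^ 2) atTop atTop) :=
  growth_contradiction_general δ c C₁ hδ hc v lam η hη1 hηtop hlam hnorm hlow U hU V V' hV hV'
end
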